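/- arXiv:1404.3593 — 2 statements merged into one kernel-verified Lean document; each statement's English description precedes it below -/
import Mathlib

section
/- Let v ∈ (ℂ*)^n, and let g_0, g_1, …, g_n be the n+1 affine polynomials associated to v (namely g_0(z) = 1 − (1/‖v‖_0) ∑_k (|v_k|/v_k) z_k and g_j(z) = 1 − ((1+‖v‖_0−|v_j|)/v_j) z_j + ∑_{k≠j} (|v_k|/v_k) z_k for 1 ≤ j ≤ n, where ‖v‖_0 = ∑_k |v_k|). If w ∈ ℝ^n lies in the amoeba of g_j for every j = 0, 1, …, n, then w = Log(v), i.e., w_k = log|v_k| for all k. -/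
open Finset

/-- The coordinatewise log-modulus map. -/
noncomputable def Log {n : ℕ} (z : Fin n → ℂ) : Fin n → ℝ :=
  fun k => Real.log (‖z k‖)

/-- The amoeba of a polynomial function on the complex torus:
the image under `Log` of its zero set in `(ℂ*)^n`. -/
noncomputable def amoeba {n : ℕ} (f : (Fin n → ℂ) → ℂ) : Set (Fin n → ℝ) :=
  Log '' {z | (∀ k, z k ≠ 0) ∧ f z = 0}

/-- `‖v‖₀ = ∑ₖ |vₖ|`. -/
noncomputable def norm0 {n : ℕ} (v : Fin n → ℂ) : ℝ := ∑ k, ‖v k‖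

/-- `g₀(z) = 1 - (1/‖v‖₀) ∑ₖ (|vₖ|/vₖ) zₖ`, the polynomial of Nisse's construction. -/
noncomputable def gzero {n : ℕ} (v : Fin n → ℂ) : (Fin n → ℂ) → ℂ :=
  fun z => 1 - (1 / (norm0 v : ℂ)) * ∑ k, ((‖v k‖ : ℂ) / v k) * z k

/-- `gⱼ(z) = 1 - ((1+‖v‖₀-|vⱼ|)/vⱼ) zⱼ + ∑_{k≠j} (|vₖ|/vₖ) zₖ`, for `1 ≤ j ≤ n`. -/
noncomputable def gj {n : ℕ} (v : Fin n → ℂ) (j : Fin n) : (Fin n → ℂ) → ℂ :=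
  fun z => 1 - (((1 + norm0 v - ‖v j‖ : ℝ) : ℂ) / v j) * z j
    + ∑ k ∈ Finset.univ.erase j, ((‖v k‖ : ℂ) / v k) * z k

/-- The family `g₀, g₁, …, gₙ` of the `n+1` affine polynomials associated to `v`. -/
noncomputable def gfam {n : ℕ} (v : Fin n → ℂ) : Fin (n + 1) → (Fin n → ℂ) → ℂ :=
  Fin.cases (gzero v) (gj v)

/-! If `w` lies in the amoeba of `gzero v`, then some `z` with `‖z k‖ = exp (w k)` solves
`∑ₖ (|vₖ|/vₖ) zₖ = ‖v‖₀`, so the triangle inequality gives `‖v‖₀ ≤ S := ∑ₖ exp (w k)`.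
Likewise a zero of `gj v j` gives `(1 + ‖v‖₀) exp (w j) ≤ |vⱼ| (1 + S)`. Summing over `j`
yields `S ≤ ‖v‖₀`, hence `S = ‖v‖₀`, then `exp (w j) ≤ |vⱼ|` for every `j`, and equal sums force
`exp (w j) = |vⱼ|`. -/

theorem eq_of_sum_le_sum_of_mul_le {ι : Type*} [Fintype ι] {a b : ι → ℝ} (hb : 0 ≤ b)
    (hsum : ∑ i, b i ≤ ∑ i, a i)
    (hmul : ∀ i, (1 + ∑ k, b k) * a i ≤ b i * (1 + ∑ k, a k)) : a = b := by
  have hS : ∑ i, a i = ∑ i, b i := by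
    have h := Finset.sum_le_sum fun i (_ : i ∈ univ) => hmul i
    rw [← Finset.mul_sum, ← Finset.sum_mul] at h
    linarith
  have hB : 0 < 1 + ∑ k, b k := by linarith [Finset.sum_nonneg fun i (_ : i ∈ univ) => hb i]
  have hle : ∀ i, a i ≤ b i := fun i =>
    le_of_mul_le_mul_left (by simpa only [hS, mul_comm (b i)] using hmul i) hB
  funext i
  exact (Finset.sum_eq_sum_iff_of_le fun i _ => hle i).1 hS i (mem_univ i)

theorem exists_norm_eq_exp_of_mem_amoeba {n : ℕ} {f : (Fin n → ℂ) → ℂ} {w : Fin n → ℝ}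
    (hw : w ∈ amoeba f) : ∃ z, f z = 0 ∧ ∀ k, ‖z k‖ = Real.exp (w k) := by
  obtain ⟨z, ⟨hz0, hz⟩, rfl⟩ := hw
  exact ⟨z, hz, fun k => (Real.exp_log (norm_pos_iff.2 (hz0 k))).symm⟩

section

variable {n : ℕ} {v : Fin n → ℂ}

theorem norm_sum_norm_div_mul_le (hv : ∀ k, v k ≠ 0) (z : Fin n → ℂ) (s : Finset (Fin n)) :
    ‖∑ k ∈ s, ((‖v k‖ : ℂ) / v k) * z k‖ ≤ ∑ k ∈ s, ‖z k‖ := by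
  refine (norm_sum_le _ _).trans_eq (Finset.sum_congr rfl fun k _ => ?_)
  rw [norm_mul, norm_div, Complex.norm_real, norm_norm, div_self (norm_ne_zero_iff.2 (hv k)),
    one_mul]

theorem norm0_le_sum_norm_of_gzero_eq_zero (hv : ∀ k, v k ≠ 0) (z : Fin n → ℂ)
    (hz : gzero v z = 0) : norm0 v ≤ ∑ k, ‖z k‖ := by
  set T := ∑ k, ((‖v k‖ : ℂ) / v k) * z k
  have hB : (norm0 v : ℂ) ≠ 0 := by
    intro h
    simp [gzero, h] at hz
  have hT : T = norm0 v := by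
    have : 1 - 1 / (norm0 v : ℂ) * T = 0 := hz
    field_simp at this
    linear_combination -this
  calc norm0 v ≤ ‖(norm0 v : ℂ)‖ := by rw [Complex.norm_real]; exact Real.le_norm_self _
    _ = ‖T‖ := by rw [hT]
    _ ≤ ∑ k, ‖z k‖ := norm_sum_norm_div_mul_le hv z univ

theorem mul_norm_le_of_gj_eq_zero (hv : ∀ k, v k ≠ 0) (z : Fin n → ℂ) {j : Fin n}
    (hz : gj v j z = 0) :
    (1 + norm0 v) * ‖z j‖ ≤ ‖v j‖ * (1 + ∑ k, ‖z k‖) := by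
  set c : ℝ := 1 + norm0 v - ‖v j‖
  set R := 1 + ∑ k ∈ univ.erase j, ((‖v k‖ : ℂ) / v k) * z k
  have hcz : (c : ℂ) * z j = v j * R := by
    have h : (c : ℂ) / v j * z j = R := by
      simp only [gj] at hz
      linear_combination -hz
    rw [← h]
    field_simp [hv j]
  have hR : ‖R‖ ≤ 1 + (∑ k, ‖z k‖ - ‖z j‖) := by
    rw [← Finset.sum_erase_eq_sub (mem_univ j)]
    refine (norm_add_le _ _).trans ?_
    rw [norm_one]
    gcongr
    exact norm_sum_norm_div_mul_le hv z _
  have h : c * ‖z j‖ ≤ ‖v j‖ * (1 + (∑ k, ‖z k‖ - ‖z j‖)) :=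
    calc c * ‖z j‖ ≤ ‖(c : ℂ) * z j‖ := by
          rw [norm_mul, Complex.norm_real]
          exact mul_le_mul_of_nonneg_right (Real.le_norm_self c) (norm_nonneg _)
      _ = ‖v j‖ * ‖R‖ := by rw [hcz, norm_mul]
      _ ≤ ‖v j‖ * (1 + (∑ k, ‖z k‖ - ‖z j‖)) :=
          mul_le_mul_of_nonneg_left hR (norm_nonneg _)
  linear_combination h

end

theorem mem_all_amoebas_eq_Log {n : ℕ} (v : Fin n → ℂ) (hv : ∀ k, v k ≠ 0)
    (w : Fin n → ℝ) (hw : ∀ j : Fin (n + 1), w ∈ amoeba (gfam v j)) :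
    w = Log v := by
  have hsum : norm0 v ≤ ∑ k, Real.exp (w k) := by
    obtain ⟨z, hz, hzw⟩ := exists_norm_eq_exp_of_mem_amoeba (hw 0)
    simpa only [hzw] using norm0_le_sum_norm_of_gzero_eq_zero hv z hz
  have hmul (j : Fin n) :
      (1 + norm0 v) * Real.exp (w j) ≤ ‖v j‖ * (1 + ∑ k, Real.exp (w k)) := by
    obtain ⟨z, hz, hzw⟩ := exists_norm_eq_exp_of_mem_amoeba (hw j.succ)
    simpa only [hzw] using mul_norm_le_of_gj_eq_zero hv z hz
  have hexp := eq_of_sum_le_sum_of_mul_le (fun k => norm_nonneg (v k)) hsum hmul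
  funext k
  rw [Log, ← congrFun hexp k, Real.log_exp]
end

section
/- Let v ∈ (ℂ*)^n. If z ∈ (ℂ*)^n satisfies |z_k| = |v_k| for all k and lies in the zero sets of all n+1 polynomials g_0, …, g_n associated to v, then z = v. -/
open Finset

/-! Only `g₀` matters. After rotating each `z_k` by the phase of `v_k`, `g₀(z) = 0` says that `n`
complex numbers of moduli `|v_k|` add up to `∑ |v_k|`; by the equality case of the triangle
inequality each of them is then the positive real `|v_k|`, which pins down `z_k = v_k`. -/

section RCLike

variable {K ι : Type*} [RCLike K]

theorem RCLike.eq_norm_of_sum_eq_sum_norm {s : Finset ι} {f : ι → K}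
    (h : ∑ i ∈ s, f i = ∑ i ∈ s, (‖f i‖ : K)) : ∀ i ∈ s, f i = ‖f i‖ := by
  have hre : ∑ i ∈ s, RCLike.re (f i) = ∑ i ∈ s, ‖f i‖ := by
    simpa only [map_sum, RCLike.ofReal_re] using congrArg RCLike.re h
  intro i hi
  rw [← RCLike.norm_le_re_iff_eq_norm]
  exact ((Finset.sum_eq_sum_iff_of_le fun j _ ↦ RCLike.re_le_norm (f j)).mp hre i hi).ge

theorem RCLike.norm_norm_div_mul {a : K} (ha : a ≠ 0) (b : K) : ‖(‖a‖ / a : K) * b‖ = ‖b‖ := by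
  simp [norm_mul, norm_div, ha]

theorem RCLike.eq_of_norm_div_mul_eq_norm {a b : K} (ha : a ≠ 0) (h : (‖a‖ / a : K) * b = ‖a‖) :
    b = a := by
  have hna : (‖a‖ : K) ≠ 0 := by simpa using ha
  rw [div_mul_eq_mul_div, div_eq_iff ha] at h
  exact mul_left_cancel₀ hna h

end RCLike

theorem sum_eq_norm0_of_gzero_eq_zero {n : ℕ} {v z : Fin n → ℂ} (h : gzero v z = 0) :
    ∑ k, (‖v k‖ / v k : ℂ) * z k = norm0 v := by
  have hN : (norm0 v : ℂ) ≠ 0 := by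
    rintro hN
    simp [gzero, hN] at h
  rwa [gzero, sub_eq_zero, one_div, eq_comm, inv_mul_eq_iff_eq_mul₀ hN, mul_one] at h

theorem torus_fiber_rigidity_general {n : ℕ} (v : Fin n → ℂ) (hv : ∀ k, v k ≠ 0)
    (z : Fin n → ℂ)
    (habs : ∀ k, ‖z k‖ = ‖v k‖)
    (hzero : ∀ j : Fin (n + 1), gfam v j z = 0) :
    z = v := by
  set t : Fin n → ℂ := fun k ↦ (‖v k‖ / v k : ℂ) * z k
  have hnorm : ∀ k, ‖t k‖ = ‖v k‖ := fun k ↦ (RCLike.norm_norm_div_mul (hv k) _).trans (habs k)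
  have hsum : ∑ k, t k = ∑ k, (‖t k‖ : ℂ) := by
    simp only [hnorm, ← Complex.ofReal_sum]
    exact sum_eq_norm0_of_gzero_eq_zero (hzero 0)
  funext k
  have htk := RCLike.eq_norm_of_sum_eq_sum_norm hsum k (Finset.mem_univ k)
  rw [hnorm k] at htk
  exact RCLike.eq_of_norm_div_mul_eq_norm (hv k) htk

theorem torus_fiber_rigidity {n : ℕ} (v : Fin n → ℂ) (hv : ∀ k, v k ≠ 0)
    (z : Fin n → ℂ) (hz : ∀ k, z k ≠ 0)
    (habs : ∀ k, ‖z k‖ = ‖v k‖)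
    (hzero : ∀ j : Fin (n + 1), gfam v j z = 0) :
    z = v :=
  torus_fiber_rigidity_general v hv z habs hzero
end
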